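/- Let G be a number and let H be any game having at least one Left option. Then for every Left option G^L of G and every Left option H^L of H one has G^L < G : H^L. In particular, in the ordinal sum G : H every Left option coming from the base G is strictly dominated by an option coming from the subordinate. -/

import Mathlib

namespace SetTheory

/-- The type of pre-games (removed from Mathlib; restated with its old meaning). -/
inductive PGame.{w} : Type (w + 1)
  | mk : ∀ α β : Type w, (α → PGame) → (β → PGame) → PGame

namespace PGame

def LeftMoves.{w} : PGame.{w} → Type w
  | mk l _ _ _ => l

def RightMoves.{w} : PGame.{w} → Type w
  | mk _ r _ _ => r

def moveLeft : ∀ g : PGame, LeftMoves g → PGame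
  | mk _l _ L _ => L

def moveRight : ∀ g : PGame, RightMoves g → PGame
  | mk _ _r _ R => R

/-- The pair `(x ≤ y, x ⧏ y)`, defined by simultaneous recursion. -/
noncomputable def leLf : PGame → PGame → Prop × Prop
  | mk _ _ xL xR => fun y =>
    PGame.rec (motive := fun _ => Prop × Prop)
      (fun yl yr yL yR IHL IHR =>
        ((∀ i, (leLf (xL i) (mk yl yr yL yR)).2) ∧ ∀ j, (IHR j).2,
         (∃ i, (IHL i).1) ∨ ∃ j, (leLf (xR j) (mk yl yr yL yR)).1)) y

noncomputable instance : LE PGame :=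
  ⟨fun x y => (leLf x y).1⟩

noncomputable instance : LT PGame :=
  ⟨fun x y => x ≤ y ∧ ¬ y ≤ x⟩

def Numeric : PGame → Prop
  | ⟨_, _, L, R⟩ => (∀ i j, L i < R j) ∧ (∀ i, Numeric (L i)) ∧ ∀ j, Numeric (R j)

instance : Zero PGame :=
  ⟨⟨PEmpty, PEmpty, PEmpty.elim, PEmpty.elim⟩⟩

instance : One PGame :=
  ⟨⟨PUnit, PEmpty, fun _ => 0, PEmpty.elim⟩⟩

def neg : PGame → PGame
  | ⟨l, r, L, R⟩ => ⟨r, l, fun i => neg (R i), fun i => neg (L i)⟩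

instance : Neg PGame :=
  ⟨neg⟩

noncomputable def add : PGame → PGame → PGame
  | mk xl xr xL xR => fun y =>
    PGame.rec (motive := fun _ => PGame)
      (fun yl yr yL yR IHL IHR => mk (xl ⊕ yl) (xr ⊕ yr)
        (Sum.elim (fun i => add (xL i) (mk yl yr yL yR)) IHL)
        (Sum.elim (fun i => add (xR i) (mk yl yr yL yR)) IHR)) y

noncomputable instance : Add PGame :=
  ⟨add⟩

/-- Game equivalence `x ≈ y ↔ x ≤ y ∧ y ≤ x`; since this relation is an equivalence,
generating an equivalence relation from it changes nothing. -/
def setoid : Setoid PGame :=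
  Relation.EqvGen.setoid (fun x y => x ≤ y ∧ y ≤ x)

instance : Setoid PGame :=
  setoid

def powHalf : ℕ → PGame
  | 0 => 1
  | n + 1 => ⟨PUnit, PUnit, fun _ => 0, fun _ => powHalf n⟩

end PGame

abbrev Game :=
  Quotient PGame.setoid

namespace Game

instance : Zero Game :=
  ⟨⟦0⟧⟩

/-- Addition of games (the lift of `PGame` addition, which respects equivalence). -/
noncomputable instance : Add Game :=
  ⟨fun x y => ⟦x.out + y.out⟧⟩

/-- Negation of games (the lift of `PGame` negation, which respects equivalence). -/
noncomputable instance : Neg Game :=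
  ⟨fun x => ⟦-x.out⟧⟩

noncomputable instance : SMul ℤ Game :=
  ⟨zsmulRec⟩

end Game

end SetTheory

open SetTheory PGame

universe u

/-- Ordinal sum `G : H`: players may move in the base `G` (ending all play in the
subordinate) or in the subordinate `H`. -/
def ordinalSum (G : PGame.{u}) : PGame.{u} → PGame.{u}
  | ⟨yl, yr, yL, yR⟩ =>
    ⟨G.LeftMoves ⊕ yl, G.RightMoves ⊕ yr,
     Sum.elim G.moveLeft fun j => ordinalSum G (yL j),
     Sum.elim G.moveRight fun j => ordinalSum G (yR j)⟩

/-- `G ≜ H`: equivalence modulo domination.  Every Left option of `G` is `≤` some Left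
option of `H`, every Left option of `H` is `≤` some Left option of `G`, every Right option
of `G` is `≥` some Right option of `H`, and every Right option of `H` is `≥` some Right
option of `G`. -/
def EquivDom (G H : PGame) : Prop :=
  (∀ i, ∃ j, G.moveLeft i ≤ H.moveLeft j) ∧
  (∀ j, ∃ i, H.moveLeft j ≤ G.moveLeft i) ∧
  (∀ i, ∃ j, H.moveRight j ≤ G.moveRight i) ∧
  (∀ j, ∃ i, G.moveRight i ≤ H.moveRight j)

/-- The ball `⟨a | b⟩`: the game with exactly one Left option `a` and exactly one Right
option `b`. -/
def ball (a b : PGame.{u}) : PGame.{u} :=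
  ⟨PUnit, PUnit, fun _ => a, fun _ => b⟩

/-- The canonical form of a natural number: `0 ≅ ⟨ | ⟩` and `n+1 ≅ ⟨n | ⟩`. -/
def canonNat : ℕ → PGame
  | 0 => 0
  | n + 1 => ⟨PUnit, PEmpty, fun _ => canonNat n, PEmpty.elim⟩

/-- The canonical form of an integer: for `n ≥ 0` it is `canonNat n`, and the canonical
form of a negative integer is the negative of the canonical form of its absolute value. -/
def canonInt (n : ℤ) : PGame :=
  if 0 ≤ n then canonNat n.toNat else -canonNat (-n).toNat

/-- The game value of the dyadic rational `a / 2 ^ q`. -/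
noncomputable def dyadicVal (a : ℤ) (q : ℕ) : Game :=
  a • (⟦powHalf q⟧ : Game)

/-!
`G^L` is itself a Left option of `G : K`, so `G : K ≤ G^L` fails. Conversely `G^L ≤ G : K`
because, `G` being a number, `G^L` dominates its own Left options and lies below every `G^R`,
while each remaining Right option `G : K^R` again has `G^L` as a Left option.
-/

namespace SetTheory.PGame

def LF (x y : PGame.{u}) : Prop := (leLf x y).2

infix:50 " ⧏ " => LF

theorem le_iff_forall_lf {x y : PGame.{u}} :
    x ≤ y ↔ (∀ i, x.moveLeft i ⧏ y) ∧ ∀ j, x ⧏ y.moveRight j := by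
  cases x; cases y; exact Iff.rfl

theorem lf_iff_exists_le {x y : PGame.{u}} :
    x ⧏ y ↔ (∃ i, x ≤ y.moveLeft i) ∨ ∃ j, x.moveRight j ≤ y := by
  cases x; cases y; exact Iff.rfl

theorem lf_iff_not_le_and_lf_iff_not_le (x y : PGame.{u}) :
    (x ⧏ y ↔ ¬ y ≤ x) ∧ (y ⧏ x ↔ ¬ x ≤ y) := by
  induction x generalizing y with
  | mk xl xr xL xR ihxL ihxR =>
    induction y with
    | mk yl yr yL yR ihyL ihyR =>
      have hyL := fun i => (ihyL i).2
      have hxR := fun j => (ihxR j (mk yl yr yL yR)).2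
      have hxL := fun i => (ihxL i (mk yl yr yL yR)).1
      have hyR := fun j => (ihyR j).1
      constructor <;>
      · rw [lf_iff_exists_le, le_iff_forall_lf]
        simp only [LeftMoves, RightMoves, moveLeft, moveRight, hyL, hxR, hxL, hyR, not_and_or,
          not_forall, not_not]

theorem lf_iff_not_le {x y : PGame.{u}} : x ⧏ y ↔ ¬ y ≤ x :=
  (lf_iff_not_le_and_lf_iff_not_le x y).1

theorem lt_of_le_of_lf {x y : PGame.{u}} (hle : x ≤ y) (hlf : x ⧏ y) : x < y :=
  ⟨hle, lf_iff_not_le.1 hlf⟩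

theorem lf_of_lt {x y : PGame.{u}} (h : x < y) : x ⧏ y :=
  lf_iff_not_le.2 h.2

theorem lf_of_le_moveLeft {x y : PGame.{u}} {i : y.LeftMoves} (h : x ≤ y.moveLeft i) : x ⧏ y :=
  lf_iff_exists_le.2 (Or.inl ⟨i, h⟩)

theorem lf_irrefl (x : PGame.{u}) : ¬ x ⧏ x := by
  induction x with
  | mk xl xr xL xR ihL ihR =>
    rw [lf_iff_exists_le]
    rintro (⟨i, h⟩ | ⟨j, h⟩)
    · exact ihL i ((le_iff_forall_lf.1 h).1 i)
    · exact ihR j ((le_iff_forall_lf.1 h).2 j)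

theorem le_refl (x : PGame.{u}) : x ≤ x :=
  not_not.1 fun h => lf_irrefl x (lf_iff_not_le.2 h)

namespace Numeric

theorem moveLeft {x : PGame.{u}} (hx : x.Numeric) (i : x.LeftMoves) : (x.moveLeft i).Numeric := by
  cases x
  exact hx.2.1 i

theorem moveLeft_lt_moveRight {x : PGame.{u}} (hx : x.Numeric) (i : x.LeftMoves)
    (j : x.RightMoves) : x.moveLeft i < x.moveRight j := by
  cases x
  exact hx.1 i j

theorem moveLeft_le {x : PGame.{u}} (hx : x.Numeric) (i : x.LeftMoves) : x.moveLeft i ≤ x := by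
  induction x with
  | mk xl xr xL xR ih _ =>
    refine le_iff_forall_lf.2 ⟨fun k => lf_of_le_moveLeft (i := i) ?_,
      fun j => lf_of_lt (hx.moveLeft_lt_moveRight i j)⟩
    exact ih i (hx.moveLeft i) k

end Numeric

end SetTheory.PGame

theorem moveLeft_lf_ordinalSum (G : PGame.{u}) (i : G.LeftMoves) (K : PGame.{u}) :
    G.moveLeft i ⧏ ordinalSum G K := by
  cases K
  exact lf_of_le_moveLeft (i := Sum.inl i) (PGame.le_refl _)

theorem moveLeft_le_ordinalSum {G : PGame.{u}} (hG : G.Numeric) (i : G.LeftMoves)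
    (K : PGame.{u}) : G.moveLeft i ≤ ordinalSum G K := by
  cases K with
  | mk yl yr yL yR =>
    refine le_iff_forall_lf.2 ⟨fun k => lf_of_le_moveLeft (i := Sum.inl i) ?_, ?_⟩
    · exact (hG.moveLeft i).moveLeft_le k
    · rintro (j | j)
      · exact lf_of_lt (hG.moveLeft_lt_moveRight i j)
      · exact moveLeft_lf_ordinalSum G i (yR j)

theorem leftOption_lt_ordinalSum_of_numeric_general (G H : PGame) (hG : G.Numeric)
    (i : G.LeftMoves) (j : H.LeftMoves) :
    G.moveLeft i < ordinalSum G (H.moveLeft j) :=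
  lt_of_le_of_lf (moveLeft_le_ordinalSum hG i _) (moveLeft_lf_ordinalSum G i _)

/-- If `G` is a number and `H` has a Left option, then every Left option of `G` is
strictly less than `G : H^L` for every Left option `H^L` of `H`. -/
theorem leftOption_lt_ordinalSum_of_numeric (G H : PGame) (hG : G.Numeric)
    (hH : Nonempty H.LeftMoves) (i : G.LeftMoves) (j : H.LeftMoves) :
    G.moveLeft i < ordinalSum G (H.moveLeft j) :=
  leftOption_lt_ordinalSum_of_numeric_general G H hG i j
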